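/- arXiv:2407.13868 — 2 statements merged into one kernel-verified Lean document; each statement's English description precedes it below -/
import Mathlib

section
/- Let H be a real Hilbert space, (m_x)_{x∈H} a family of probability measures on a Polish space Ξ with W₁(m_x,m_y) ≤ τ‖x−y‖. Let F_{m_x} = A + B_{m_x}, where A is maximally monotone, B(·,ξ) are maps with ξ↦B(x,ξ) β-Lipschitz for all x, B_{m}(x)=E_{ξ∼m}B(x,ξ). Assume each F_{m_x} is μ-strongly monotone and that zer(F_{m_x}) is a singleton {S(x)} for each x. Then the self-map S:H→H is ρ-Lipschitz with ρ=βτ/μ; consequently, if ρ<1 there exists a unique point x̄∈H with 0∈F_{m_{x̄}}(x̄). -/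
open MeasureTheory
open scoped InnerProductSpace

/-- with F_{m_x} = A + B_{m_x} μ-strongly monotone and the
distribution family τ-Lipschitz for W₁ (expressed by Kantorovich–Rubinstein
duality), the map S : x ↦ the unique zero of F_{m_x} is (βτ/μ)-Lipschitz;
if βτ/μ < 1 there is a unique equilibrium x̄ with 0 ∈ F_{m_{x̄}}(x̄). -/
theorem stmt4 {H Ξ : Type*} [NormedAddCommGroup H] [InnerProductSpace ℝ H]
    [CompleteSpace H] [MetricSpace Ξ] [MeasurableSpace Ξ] [BorelSpace Ξ]
    [PolishSpace Ξ]
    (A : H → Set H) (B : H → Ξ → H) (m : H → Measure Ξ)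
    [∀ x, IsProbabilityMeasure (m x)]
    (β τ μ : ℝ) (hβ : 0 < β) (hτ : 0 < τ) (hμ : 0 < μ)
    -- A is monotone and maximally monotone
    (hAmono : ∀ z w u v : H, u ∈ A z → v ∈ A w → 0 ≤ ⟪z - w, u - v⟫_ℝ)
    (hAmax : ∀ p u : H, (∀ q v : H, v ∈ A q → 0 ≤ ⟪p - q, u - v⟫_ℝ) → u ∈ A p)
    -- ξ ↦ B(z,ξ) is β-Lipschitz for every z
    (hB : ∀ z : H, ∀ ξ ζ : Ξ, ‖B z ξ - B z ζ‖ ≤ β * dist ξ ζ)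
    (hint : ∀ x z : H, Integrable (B z) (m x))
    -- W₁(m_x, m_y) ≤ τ‖x − y‖ via duality
    (hW1 : ∀ x y : H, ∀ h : Ξ → ℝ, LipschitzWith 1 h →
      |(∫ ξ, h ξ ∂(m x)) - ∫ ξ, h ξ ∂(m y)| ≤ τ * ‖x - y‖)
    -- F_{m_x} := A + B_{m_x} is μ-strongly monotone for every x
    (hsm : ∀ x z w u v : H,
      u ∈ (fun a => a + ∫ ξ, B z ξ ∂(m x)) '' A z →
      v ∈ (fun a => a + ∫ ξ, B w ξ ∂(m x)) '' A w →
      μ * ‖z - w‖ ^ 2 ≤ ⟪z - w, u - v⟫_ℝ)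
    -- zer(F_{m_x}) = {S x}
    (S : H → H)
    (hS : ∀ x : H, {u : H | (0 : H) ∈ (fun a => a + ∫ ξ, B u ξ ∂(m x)) '' A u} = {S x}) :
    (∀ x y : H, ‖S x - S y‖ ≤ β * τ / μ * ‖x - y‖) ∧
      (β * τ / μ < 1 →
        ∃! xb : H, (0 : H) ∈ (fun a => a + ∫ ξ, B xb ξ ∂(m xb)) '' A xb) := by
  -- membership of S x in the zero set
  have hzero : ∀ x : H, (0 : H) ∈ (fun a => a + ∫ ξ, B (S x) ξ ∂(m x)) '' A (S x) :=
    fun x => (Set.ext_iff.mp (hS x) (S x)).mpr rfl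
  -- key Lipschitz estimate
  have key : ∀ x y : H, ‖S x - S y‖ ≤ β * τ / μ * ‖x - y‖ := by
    intro x y
    set z := S x with hz
    set w := S y with hw
    obtain ⟨a, haA, ha⟩ := hzero x
    obtain ⟨b, hbA, hb⟩ := hzero y
    -- b = -∫ B w ∂ m y
    have hbval : b = -∫ ξ, B w ξ ∂(m y) := by
      have := hb; simp only at this; linear_combination (norm := module) this
    set v0 : H := (∫ ξ, B w ξ ∂(m y)) - ∫ ξ, B w ξ ∂(m x) with hv0
    -- bound ‖v0‖ ≤ β * τ * ‖x - y‖
    have hv0bound : ‖v0‖ ≤ β * τ * ‖x - y‖ := by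
      rcases eq_or_ne v0 0 with h0 | h0
      · rw [h0, norm_zero]; exact mul_nonneg (by positivity) (norm_nonneg _)
      · have hc : 0 < ‖v0‖ * β := mul_pos (norm_pos_iff.mpr h0) hβ
        set h : Ξ → ℝ := fun ξ => ⟪v0, B w ξ⟫_ℝ / (‖v0‖ * β) with hh
        have hlip : LipschitzWith 1 h := by
          apply LipschitzWith.of_dist_le_mul
          intro ξ ζ
          rw [Real.dist_eq]
          have : h ξ - h ζ = ⟪v0, B w ξ - B w ζ⟫_ℝ / (‖v0‖ * β) := by
            rw [hh]; simp [inner_sub_right, sub_div]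
          rw [this, abs_div, abs_of_pos hc, div_le_iff₀ hc]
          calc |⟪v0, B w ξ - B w ζ⟫_ℝ| ≤ ‖v0‖ * ‖B w ξ - B w ζ‖ :=
                abs_real_inner_le_norm _ _
            _ ≤ ‖v0‖ * (β * dist ξ ζ) := by
                exact mul_le_mul_of_nonneg_left (hB w ξ ζ) (norm_nonneg _)
            _ = 1 * dist ξ ζ * (‖v0‖ * β) := by ring
        have hW := hW1 y x h hlip
        have hint1 : ∀ x' : H, (∫ ξ, h ξ ∂(m x')) = ⟪v0, ∫ ξ, B w ξ ∂(m x')⟫_ℝ / (‖v0‖ * β) := by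
          intro x'
          rw [hh]
          rw [integral_div, integral_inner (hint x' w)]
        rw [hint1 y, hint1 x, div_sub_div_same, ← inner_sub_right] at hW
        have : ⟪v0, v0⟫_ℝ / (‖v0‖ * β) ≤ τ * ‖x - y‖ := by
          rw [norm_sub_rev x y]
          exact (le_abs_self _).trans hW
        rw [real_inner_self_eq_norm_sq, div_le_iff₀ hc] at this
        have hnv : 0 < ‖v0‖ := norm_pos_iff.mpr h0
        nlinarith
    -- strong monotonicity
    have hmem1 : (0 : H) ∈ (fun a => a + ∫ ξ, B z ξ ∂(m x)) '' A z := ⟨a, haA, ha⟩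
    have hmem2 : b + ∫ ξ, B w ξ ∂(m x) ∈ (fun a => a + ∫ ξ, B w ξ ∂(m x)) '' A w :=
      ⟨b, hbA, rfl⟩
    have hsm' := hsm x z w 0 (b + ∫ ξ, B w ξ ∂(m x)) hmem1 hmem2
    have hinner : ⟪z - w, (0 : H) - (b + ∫ ξ, B w ξ ∂(m x))⟫_ℝ = ⟪z - w, v0⟫_ℝ := by
      rw [hbval, hv0]; congr 1; abel
    rw [hinner] at hsm'
    have hcs : ⟪z - w, v0⟫_ℝ ≤ ‖z - w‖ * ‖v0‖ := real_inner_le_norm _ _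
    have hmain : μ * ‖z - w‖ ^ 2 ≤ ‖z - w‖ * (β * τ * ‖x - y‖) :=
      hsm'.trans (hcs.trans (mul_le_mul_of_nonneg_left hv0bound (norm_nonneg _)))
    rcases eq_or_lt_of_le (norm_nonneg (z - w)) with hzw | hzw
    · rw [← hzw]; positivity
    · rw [div_mul_eq_mul_div, le_div_iff₀ hμ]
      nlinarith
  refine ⟨key, fun hρ => ?_⟩
  -- equivalence: equilibrium ↔ fixed point of S
  have hequiv : ∀ xb : H,
      ((0 : H) ∈ (fun a => a + ∫ ξ, B xb ξ ∂(m xb)) '' A xb) ↔ S xb = xb := by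
    intro xb
    constructor
    · intro h0
      exact ((Set.ext_iff.mp (hS xb) xb).mp h0).symm
    · intro hfix
      have := hzero xb
      rwa [hfix] at this
  have hρ0 : 0 ≤ β * τ / μ := by positivity
  set K : NNReal := ⟨β * τ / μ, hρ0⟩ with hK
  have hlipS : LipschitzWith K S := by
    apply LipschitzWith.of_dist_le_mul
    intro x y
    rw [dist_eq_norm, dist_eq_norm]
    exact key x y
  have hcontr : ContractingWith K S := ⟨by exact_mod_cast hρ, hlipS⟩
  have : Nonempty H := ⟨0⟩
  refine ⟨hcontr.fixedPoint S, (hequiv _).mpr (hcontr.fixedPoint_isFixedPt), ?_⟩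
  intro y hy
  exact hcontr.fixedPoint_unique ((hequiv y).mp hy)
end

section
/- Under the assumptions of the equilibrium existence theorem with uniform monotonicity modulus φ satisfying φ(t) > βτt for t>0: the selection map S(x) = the unique zero of F_{m_x} satisfies φ(‖S(x)−S(y)‖) ≤ βτ‖x−y‖ for all x,y∈H; hence ‖S(x)−S(y)‖ ≤ φ⁻¹(βτ‖x−y‖) < ‖x−y‖ whenever x≠y, and S has a unique fixed point. -/
open MeasureTheory Filter
open scoped InnerProductSpace

/-- with F_{m_x} uniformly monotone with modulus φ satisfying
φ(t) > βτt for t > 0, the selection S(x) = the unique zero of F_{m_x}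
satisfies φ(‖S x − S y‖) ≤ βτ‖x − y‖, hence ‖S x − S y‖ < ‖x − y‖ for x ≠ y,
and S has a unique fixed point. -/
theorem stmt5 {H Ξ : Type*} [NormedAddCommGroup H] [InnerProductSpace ℝ H]
    [CompleteSpace H] [MetricSpace Ξ] [MeasurableSpace Ξ] [BorelSpace Ξ]
    [PolishSpace Ξ]
    (A : H → Set H) (B : H → Ξ → H) (m : H → Measure Ξ)
    [∀ x, IsProbabilityMeasure (m x)]
    (β τ : ℝ) (hβ : 0 < β) (hτ : 0 < τ)
    (φ : ℝ → ℝ)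
    (hφmono : MonotoneOn φ (Set.Ici 0)) (hφ0 : φ 0 = 0)
    (hφtop : Tendsto φ atTop atTop)
    (hφdom : ∀ t > (0:ℝ), β * τ * t < φ t)
    -- A is maximally monotone
    (hAmono : ∀ z w u v : H, u ∈ A z → v ∈ A w → 0 ≤ ⟪z - w, u - v⟫_ℝ)
    (hAmax : ∀ p u : H, (∀ q v : H, v ∈ A q → 0 ≤ ⟪p - q, u - v⟫_ℝ) → u ∈ A p)
    -- ξ ↦ B(z,ξ) is β-Lipschitz for every z
    (hB : ∀ z : H, ∀ ξ ζ : Ξ, ‖B z ξ - B z ζ‖ ≤ β * dist ξ ζ)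
    (hint : ∀ x z : H, Integrable (B z) (m x))
    -- W₁(m_x, m_y) ≤ τ‖x − y‖ via duality
    (hW1 : ∀ x y : H, ∀ h : Ξ → ℝ, LipschitzWith 1 h →
      |(∫ ξ, h ξ ∂(m x)) - ∫ ξ, h ξ ∂(m y)| ≤ τ * ‖x - y‖)
    -- F_{m_x} := A + B_{m_x} is uniformly monotone with modulus φ for every x
    (hum : ∀ x z w u v : H,
      u ∈ (fun a => a + ∫ ξ, B z ξ ∂(m x)) '' A z →
      v ∈ (fun a => a + ∫ ξ, B w ξ ∂(m x)) '' A w →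
      ‖z - w‖ * φ ‖z - w‖ ≤ ⟪z - w, u - v⟫_ℝ)
    -- zer(F_{m_x}) = {S x}
    (S : H → H)
    (hS : ∀ x : H, {u : H | (0 : H) ∈ (fun a => a + ∫ ξ, B u ξ ∂(m x)) '' A u} = {S x}) :
    (∀ x y : H, φ ‖S x - S y‖ ≤ β * τ * ‖x - y‖) ∧
      (∀ x y : H, x ≠ y → ‖S x - S y‖ < ‖x - y‖) ∧
      (∃! xb : H, S xb = xb) := by
  have hc : 0 < β * τ := mul_pos hβ hτ
  have hφnn : ∀ t : ℝ, 0 ≤ t → 0 ≤ φ t := by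
    intro t ht
    have := hφmono (Set.mem_Ici.2 (le_refl (0:ℝ))) (Set.mem_Ici.2 ht) ht
    simpa [hφ0] using this
  -- the key quantitative estimate
  have part1 : ∀ x y : H, φ ‖S x - S y‖ ≤ β * τ * ‖x - y‖ := by
    intro x y
    set z := S x with hz
    set w := S y with hw
    -- S x is a zero of F_{m_x}
    have hx : (0 : H) ∈ (fun a => a + ∫ ξ, B z ξ ∂(m x)) '' A z := by
      have h := hS x
      rw [Set.eq_singleton_iff_unique_mem] at h
      exact h.1
    have hy : (0 : H) ∈ (fun a => a + ∫ ξ, B w ξ ∂(m y)) '' A w := by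
      have h := hS y
      rw [Set.eq_singleton_iff_unique_mem] at h
      exact h.1
    obtain ⟨b, hbA, hby⟩ := hy
    simp only at hby
    have hb : b = -(∫ ξ, B w ξ ∂(m y)) := eq_neg_of_add_eq_zero_left hby
    have hv : b + ∫ ξ, B w ξ ∂(m x) ∈ (fun a => a + ∫ ξ, B w ξ ∂(m x)) '' A w :=
      ⟨b, hbA, rfl⟩
    have hkey := hum x z w 0 (b + ∫ ξ, B w ξ ∂(m x)) hx hv
    have hrw : (0:H) - (b + ∫ ξ, B w ξ ∂(m x))
        = (∫ ξ, B w ξ ∂(m y)) - (∫ ξ, B w ξ ∂(m x)) := by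
      rw [hb]; abel
    rw [hrw] at hkey
    rcases eq_or_lt_of_le (norm_nonneg (z - w)) with h0 | hpos
    · have : φ ‖z - w‖ = 0 := by rw [← h0, hφ0]
      rw [this]
      positivity
    · -- bound the inner product by Wasserstein duality
      set e := z - w with he
      set Ix := ∫ ξ, B w ξ ∂(m x) with hIx
      set Iy := ∫ ξ, B w ξ ∂(m y) with hIy
      have hβe : 0 < β * ‖e‖ := mul_pos hβ hpos
      have hlip : LipschitzWith 1 (fun ξ => ⟪e, B w ξ⟫_ℝ / (β * ‖e‖)) := by
        apply LipschitzWith.of_dist_le_mul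
        intro ξ ζ
        rw [Real.dist_eq, div_sub_div_same, abs_div, abs_of_pos hβe,
          div_le_iff₀ hβe]
        have h1 : ⟪e, B w ξ⟫_ℝ - ⟪e, B w ζ⟫_ℝ = ⟪e, B w ξ - B w ζ⟫_ℝ :=
          (inner_sub_right _ _ _).symm
        rw [h1]
        calc |⟪e, B w ξ - B w ζ⟫_ℝ| ≤ ‖e‖ * ‖B w ξ - B w ζ‖ :=
              abs_real_inner_le_norm _ _
          _ ≤ ‖e‖ * (β * dist ξ ζ) := by
              apply mul_le_mul_of_nonneg_left (hB w ξ ζ) (norm_nonneg e)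
          _ = ↑(1:NNReal) * dist ξ ζ * (β * ‖e‖) := by push_cast; ring
      have hW := hW1 x y _ hlip
      have hix : ∫ ξ, ⟪e, B w ξ⟫_ℝ / (β * ‖e‖) ∂(m x) = ⟪e, Ix⟫_ℝ / (β * ‖e‖) := by
        rw [integral_div, integral_inner (hint x w)]
      have hiy : ∫ ξ, ⟪e, B w ξ⟫_ℝ / (β * ‖e‖) ∂(m y) = ⟪e, Iy⟫_ℝ / (β * ‖e‖) := by
        rw [integral_div, integral_inner (hint y w)]
      rw [hix, hiy, div_sub_div_same, abs_div, abs_of_pos hβe, div_le_iff₀ hβe] at hW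
      have habs : |⟪e, Ix⟫_ℝ - ⟪e, Iy⟫_ℝ| ≤ τ * ‖x - y‖ * (β * ‖e‖) := hW
      have hineq : ⟪e, Iy - Ix⟫_ℝ ≤ ‖e‖ * (β * τ * ‖x - y‖) := by
        have h2 : ⟪e, Iy - Ix⟫_ℝ = -(⟪e, Ix⟫_ℝ - ⟪e, Iy⟫_ℝ) := by
          rw [inner_sub_right]; ring
        have h3 : -(⟪e, Ix⟫_ℝ - ⟪e, Iy⟫_ℝ) ≤ |⟪e, Ix⟫_ℝ - ⟪e, Iy⟫_ℝ| := neg_le_abs _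
        calc ⟪e, Iy - Ix⟫_ℝ ≤ |⟪e, Ix⟫_ℝ - ⟪e, Iy⟫_ℝ| := h2 ▸ h3
          _ ≤ τ * ‖x - y‖ * (β * ‖e‖) := habs
          _ = ‖e‖ * (β * τ * ‖x - y‖) := by ring
      have : ‖e‖ * φ ‖e‖ ≤ ‖e‖ * (β * τ * ‖x - y‖) := le_trans hkey hineq
      exact le_of_mul_le_mul_left this hpos
  -- strict contraction estimate
  have key : ∀ x y : H, ∀ ε : ℝ, 0 < ε → β * τ * ‖x - y‖ < φ ε → ‖S x - S y‖ < ε := by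
    intro x y ε hε hlt
    by_contra hge
    push_neg at hge
    have h1 : φ ε ≤ φ ‖S x - S y‖ :=
      hφmono (Set.mem_Ici.2 hε.le) (Set.mem_Ici.2 (norm_nonneg _)) hge
    have := lt_of_le_of_lt (h1.trans (part1 x y)) hlt
    exact lt_irrefl _ this
  have part2 : ∀ x y : H, x ≠ y → ‖S x - S y‖ < ‖x - y‖ := by
    intro x y hxy
    have hxy' : 0 < ‖x - y‖ := by
      rw [norm_pos_iff, sub_ne_zero]; exact hxy
    exact key x y _ hxy' (hφdom _ hxy')
  have hnonexp : ∀ x y : H, ‖S x - S y‖ ≤ ‖x - y‖ := by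
    intro x y
    rcases eq_or_ne x y with h | h
    · simp [h]
    · exact (part2 x y h).le
  refine ⟨part1, part2, ?_⟩
  -- iterate to find the fixed point
  set u : ℕ → H := fun n => S^[n] 0 with hu
  have hu_succ : ∀ n, u (n + 1) = S (u n) := fun n => Function.iterate_succ_apply' S n 0
  set d : ℕ → ℝ := fun n => ‖u (n + 1) - u n‖ with hd
  have hd_nn : ∀ n, 0 ≤ d n := fun n => norm_nonneg _
  have hd_anti : Antitone d := by
    apply antitone_nat_of_succ_le
    intro n
    have : d (n + 1) = ‖S (u (n+1)) - S (u n)‖ := by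
      simp only [hd, hu_succ]
    rw [this]
    exact hnonexp _ _
  have hd_bdd : BddBelow (Set.range d) := ⟨0, by rintro _ ⟨n, rfl⟩; exact hd_nn n⟩
  have hdL : Tendsto d atTop (nhds (⨅ n, d n)) := tendsto_atTop_ciInf hd_anti hd_bdd
  set L := ⨅ n, d n with hL
  have hL_nn : 0 ≤ L := le_ciInf hd_nn
  have hL0 : L = 0 := by
    by_contra hne
    have hLpos : 0 < L := lt_of_le_of_ne hL_nn (Ne.symm hne)
    have hφL : ∀ n, φ L ≤ β * τ * d n := by
      intro n
      have h1 : L ≤ d (n + 1) := ciInf_le hd_bdd (n + 1)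
      have h2 : φ L ≤ φ (d (n + 1)) :=
        hφmono (Set.mem_Ici.2 hL_nn) (Set.mem_Ici.2 (hd_nn _)) h1
      have h3 : φ (d (n + 1)) ≤ β * τ * d n := by
        have : d (n + 1) = ‖S (u (n+1)) - S (u n)‖ := by simp only [hd, hu_succ]
        rw [this]
        exact part1 _ _
      exact h2.trans h3
    have htd : Tendsto (fun n => β * τ * d n) atTop (nhds (β * τ * L)) :=
      hdL.const_mul _
    have hlt : β * τ * L < φ L := hφdom L hLpos
    obtain ⟨n, hn⟩ := (htd.eventually_lt_const hlt).exists
    exact absurd (hφL n) (not_le.2 hn)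
  have hd0 : Tendsto d atTop (nhds 0) := hL0 ▸ hdL
  -- Cauchy sequence via the Meir–Keeler style estimate
  have hcs : CauchySeq u := by
    rw [Metric.cauchySeq_iff]
    intro ε hε
    set ε1 := ε / 5 with hε1
    have hε1p : 0 < ε1 := by positivity
    set δ := min ((φ ε1 - β * τ * ε1) / (β * τ)) ε1 with hδ
    have hδ1 : 0 < (φ ε1 - β * τ * ε1) / (β * τ) :=
      div_pos (sub_pos.2 (hφdom _ hε1p)) hc
    have hδp : 0 < δ := lt_min hδ1 hε1p
    have hδε : δ ≤ ε1 := min_le_right _ _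
    -- Meir–Keeler property
    have hMK : ∀ a b : H, ‖a - b‖ < ε1 + δ → ‖S a - S b‖ < ε1 := by
      intro a b hab
      apply key a b ε1 hε1p
      have h1 : β * τ * ‖a - b‖ < β * τ * (ε1 + δ) := by
        exact (mul_lt_mul_iff_right₀ hc).2 hab
      have h2 : β * τ * (ε1 + δ) ≤ φ ε1 := by
        have : δ ≤ (φ ε1 - β * τ * ε1) / (β * τ) := min_le_left _ _
        have h3 : β * τ * δ ≤ φ ε1 - β * τ * ε1 := by
          rw [mul_comm]
          exact (le_div_iff₀ hc).1 this
        nlinarith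
      exact lt_of_lt_of_le h1 h2
    obtain ⟨N, hN⟩ := (Metric.tendsto_atTop.1 hd0) δ hδp
    have hdN : d N < δ := by
      have := hN N le_rfl
      rwa [Real.dist_eq, sub_zero, abs_of_nonneg (hd_nn N)] at this
    have hclaim : ∀ k : ℕ, ‖u N - u (N + k)‖ < ε1 + δ := by
      intro k
      induction k with
      | zero => simpa using add_pos hε1p hδp
      | succ k ih =>
        have h1 : ‖u (N + 1) - u (N + k + 1)‖ < ε1 := by
          have : u (N + 1) = S (u N) := hu_succ N
          have h2 : u (N + k + 1) = S (u (N + k)) := hu_succ (N + k)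
          rw [this, h2]
          exact hMK _ _ ih
        calc ‖u N - u (N + (k + 1))‖
            ≤ ‖u N - u (N + 1)‖ + ‖u (N + 1) - u (N + k + 1)‖ := by
              have : u N - u (N + (k+1)) = (u N - u (N+1)) + (u (N+1) - u (N+k+1)) := by
                rw [show N + (k+1) = N + k + 1 from by ring]; abel
              rw [this]; exact norm_add_le _ _
          _ < δ + ε1 := by
              apply add_lt_add _ h1
              rw [norm_sub_rev]; exact hdN
          _ = ε1 + δ := by ring
    refine ⟨N, fun p hp q hq => ?_⟩
    have h1 : ‖u N - u p‖ < ε1 + δ := by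
      obtain ⟨k, rfl⟩ := Nat.exists_eq_add_of_le hp
      exact hclaim k
    have h2 : ‖u N - u q‖ < ε1 + δ := by
      obtain ⟨k, rfl⟩ := Nat.exists_eq_add_of_le hq
      exact hclaim k
    rw [dist_eq_norm]
    calc ‖u p - u q‖ ≤ ‖u N - u p‖ + ‖u N - u q‖ := by
          have : u p - u q = -(u N - u p) + (u N - u q) := by abel
          rw [this]
          exact (norm_add_le _ _).trans (by rw [norm_neg])
      _ < (ε1 + δ) + (ε1 + δ) := add_lt_add h1 h2
      _ ≤ ε1 + ε1 + (ε1 + ε1) := by linarith [hδε]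
      _ < ε := by rw [hε1]; linarith
  obtain ⟨xb, hxb⟩ := cauchySeq_tendsto_of_complete hcs
  have hScont : Continuous S := by
    apply LipschitzWith.continuous (K := 1)
    apply LipschitzWith.of_dist_le_mul
    intro a b
    rw [dist_eq_norm, dist_eq_norm]
    simpa using hnonexp a b
  have hfix : S xb = xb := by
    have h1 : Tendsto (fun n => S (u n)) atTop (nhds (S xb)) :=
      (hScont.tendsto xb).comp hxb
    have h2 : Tendsto (fun n => u (n + 1)) atTop (nhds xb) :=
      hxb.comp (tendsto_add_atTop_nat 1)
    have h3 : (fun n => u (n + 1)) = fun n => S (u n) := funext hu_succ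
    rw [h3] at h2
    exact tendsto_nhds_unique h1 h2
  refine ⟨xb, hfix, fun y hy => ?_⟩
  by_contra hne
  have := part2 y xb hne
  rw [hy, hfix] at this
  exact lt_irrefl _ this
end
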